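/- arXiv:1603.04879 — 3 statements merged into one kernel-verified Lean document; each statement's English description precedes it below -/
import Mathlib

section
/- Let G be a nonabelian finite p-group with an abelian maximal subgroup A. Then |G : Z(G)| = p·|G'|. -/
/-!
Since `A` is a maximal subgroup of a `p`-group it is normal, and `G = A ⟨b⟩` for any `b ∉ A`.
As `A` is abelian and normal, `a ↦ ⁅a, b⁆` is a homomorphism `A → G`. Its kernel is
`C_A(b) = Z(G)` (a central element outside `A` would make `G = A ⟨z⟩` abelian) and its image is
`G'`: the image is normal and `G` modulo it is generated by the commuting images of `A` and `b`.
Hence `|A| = |Z(G)| |G'|`, and `|G : Z(G)| = p |A| / |Z(G)| = p |G'|`.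
-/

open scoped IsMulCommutative commutatorElement

namespace Subgroup

variable {G : Type*} [Group G]

theorem isCoatom_of_index_prime {H : Subgroup G} (hH : H.index.Prime) : IsCoatom H := by
  have : H.FiniteIndex := ⟨hH.ne_zero⟩
  refine ⟨fun h => hH.ne_one (index_eq_one.mpr h), fun K hK => index_eq_one.mp ?_⟩
  exact (hH.eq_one_or_self_of_dvd _ (index_dvd_of_le hK.le)).resolve_right
    (index_strictAnti hK).ne

theorem sup_zpowers_eq_top_of_isCoatom {H : Subgroup G} (hH : IsCoatom H) {b : G}
    (hb : b ∉ H) : H ⊔ zpowers b = ⊤ :=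
  hH.2 _ (lt_of_le_of_ne le_sup_left fun h => hb (h ▸ mem_sup_right (mem_zpowers b)))

theorem mem_center_of_sup_zpowers_eq_top {H : Subgroup G} {b x : G}
    (hHb : H ⊔ zpowers b = ⊤) (hH : ∀ h ∈ H, Commute h x) (hb : Commute b x) :
    x ∈ center G := by
  have hle : ⊤ ≤ centralizer {x} := hHb ▸ sup_le
    (fun h hh => mem_centralizer_singleton_iff.mpr (hH h hh))
    (zpowers_le.mpr (mem_centralizer_singleton_iff.mpr hb))
  exact mem_center_iff.mpr fun g => mem_centralizer_singleton_iff.mp (hle (mem_top g))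

theorem isMulCommutative_of_sup_zpowers_eq_top {H : Subgroup G} [IsMulCommutative H] {b : G}
    (hHb : H ⊔ zpowers b = ⊤) (hH : ∀ h ∈ H, Commute h b) : IsMulCommutative G := by
  have hcomm : ∀ h ∈ H, ∀ h' ∈ H, Commute h h' := fun h hh h' hh' =>
    setLike_mul_comm hh hh'
  refine center_eq_top_iff.mp (top_le_iff.mp (hHb ▸ sup_le ?_ (zpowers_le.mpr ?_)))
  · exact fun h hh => mem_center_of_sup_zpowers_eq_top hHb (fun h' hh' => hcomm h' hh' h hh)
      (hH h hh).symm
  · exact mem_center_of_sup_zpowers_eq_top hHb hH (Commute.refl b)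

theorem center_le_of_isCoatom {A : Subgroup G} [IsMulCommutative A] (hA : IsCoatom A)
    (hG : ¬ IsMulCommutative G) : center G ≤ A := fun z hz => by
  by_contra hzA
  exact hG (isMulCommutative_of_sup_zpowers_eq_top (sup_zpowers_eq_top_of_isCoatom hA hzA)
    fun a _ => (mem_center_iff.mp hz a))

end Subgroup

open Subgroup

section CommutatorHom

variable {G : Type*} [Group G] (A : Subgroup G) [A.Normal] [IsMulCommutative A] (b : G)

def commutatorHom : A →* G :=
  A.subtype.comp (MonoidHom.id A / (MulAut.conjNormal b).toMonoidHom)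

variable {A b}

theorem commutatorHom_apply (a : A) : commutatorHom A b a = ⁅(a : G), b⁆ := by
  simp [commutatorHom, commutatorElement_def, div_eq_mul_inv, mul_assoc]

theorem commutatorElement_mul_right_of_commute {x c : G} (y : G) (h : Commute x c) :
    ⁅x, y * c⁆ = ⁅x, y⁆ := by
  rw [commutatorElement_def, commutatorElement_def]
  have hc : c * x⁻¹ * c⁻¹ = x⁻¹ := by rw [← h.inv_left.eq, mul_inv_cancel_right]
  calc x * (y * c) * x⁻¹ * (y * c)⁻¹ = x * y * (c * x⁻¹ * c⁻¹) * y⁻¹ := by group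
    _ = x * y * x⁻¹ * y⁻¹ := by rw [hc]

theorem map_ker_commutatorHom (hAb : A ⊔ zpowers b = ⊤) (hZ : center G ≤ A) :
    (commutatorHom A b).ker.map A.subtype = center G := by
  ext x
  constructor
  · rintro ⟨a, ha, rfl⟩
    rw [SetLike.mem_coe, MonoidHom.mem_ker, commutatorHom_apply,
      commutatorElement_eq_one_iff_mul_comm] at ha
    exact mem_center_of_sup_zpowers_eq_top hAb
      (fun a' ha' => setLike_mul_comm ha' a.2) ha.symm
  · intro hx
    refine ⟨⟨x, hZ hx⟩, ?_, rfl⟩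
    rw [SetLike.mem_coe, MonoidHom.mem_ker, commutatorHom_apply,
      commutatorElement_eq_one_iff_mul_comm]
    exact (mem_center_iff.mp hx b).symm

theorem normal_range_commutatorHom (hGA : commutator G ≤ A) :
    (commutatorHom A b).range.Normal where
  conj_mem n hn g := by
    obtain ⟨a, rfl⟩ := hn
    refine ⟨⟨g * a * g⁻¹, Normal.conj_mem ‹_› _ a.2 g⟩, ?_⟩
    -- `g b g⁻¹ = b * ⁅b⁻¹, g⁆` and `⁅b⁻¹, g⁆ ∈ A` commutes with `g a g⁻¹`
    have hc : ⁅b⁻¹, g⁆ ∈ A := hGA (commutator_mem_commutator (mem_top _) (mem_top _))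
    have hcomm : Commute (g * a * g⁻¹) ⁅b⁻¹, g⁆ :=
      setLike_mul_comm (Normal.conj_mem ‹_› _ a.2 g) hc
    rw [commutatorHom_apply, commutatorHom_apply,
      ← commutatorElement_mul_right_of_commute b hcomm]
    simp only [commutatorElement_def]
    group

theorem range_commutatorHom (hAb : A ⊔ zpowers b = ⊤) :
    (commutatorHom A b).range = commutator G := by
  have hGA : commutator G ≤ A :=
    Normal.commutator_le_of_self_sup_commutative_eq_top hAb inferInstance
  have := normal_range_commutatorHom (b := b) hGA
  refine le_antisymm ?_ (Normal.quotient_commutative_iff_commutator_le.mp ?_)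
  · rintro _ ⟨a, rfl⟩
    rw [commutatorHom_apply]
    exact commutator_mem_commutator (mem_top _) (mem_top _)
  set π := QuotientGroup.mk' (commutatorHom A b).range
  have hπAb : A.map π ⊔ zpowers (π b) = ⊤ := by
    rw [← MonoidHom.map_zpowers, ← Subgroup.map_sup, hAb, ← MonoidHom.range_eq_map,
      MonoidHom.range_eq_top.mpr (QuotientGroup.mk'_surjective _)]
  refine isMulCommutative_of_sup_zpowers_eq_top hπAb ?_
  rintro _ ⟨a, ha, rfl⟩
  rw [commute_iff_eq, ← commutatorElement_eq_one_iff_mul_comm, ← map_commutatorElement,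
    QuotientGroup.mk'_apply, QuotientGroup.eq_one_iff]
  exact ⟨⟨a, ha⟩, commutatorHom_apply _⟩

end CommutatorHom

theorem stmt1 {p : ℕ} (hp : p.Prime) {G : Type} [Group G] [Finite G]
    (hG : IsPGroup p G) (A : Subgroup G) (hA : IsMulCommutative A) (hAmax : A.index = p)
    (hnab : ∃ x y : G, x * y ≠ y * x) :
    (Subgroup.center G).index = p * Nat.card (commutator G) := by
  have hcoatom : IsCoatom A := isCoatom_of_index_prime (hAmax ▸ hp)
  have : Fact p.Prime := ⟨hp⟩
  have : Group.IsNilpotent G := hG.isNilpotent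
  have : A.Normal := Group.normalizerCondition_of_isNilpotent.normal_of_coatom A hcoatom
  have hZ : center G ≤ A := center_le_of_isCoatom hcoatom fun h => by
    obtain ⟨x, y, hxy⟩ := hnab
    exact hxy (h.is_comm.comm x y)
  obtain ⟨b, hb⟩ : ∃ b, b ∉ A := SetLike.exists_not_mem_of_ne_top A hcoatom.1 rfl
  have hAb := sup_zpowers_eq_top_of_isCoatom hcoatom hb
  have hcard : Nat.card (center G) * Nat.card (commutator G) = Nat.card A := by
    rw [← map_ker_commutatorHom hAb hZ, card_map_of_injective A.subtype_injective,
      ← range_commutatorHom hAb, ← index_ker, card_mul_index]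
  refine Nat.eq_of_mul_eq_mul_left (Nat.card_pos (α := center G)) ?_
  rw [card_mul_index, ← A.card_mul_index, hAmax, ← hcard]
  ring
end

section
/- Let G be a finite p-group of maximal class of order at least p^4, and let H be a maximal subgroup of G with H ≠ G_1 := C_G(γ_2(G)/γ_4(G)). Then H' = γ_3(G). -/
/-!
Write `γ i` for the lower central series, so `(⊤ : Subgroup G).lowerCentralSeries k` is `γ (k + 1)`.
In a group of maximal class every factor `γ i / γ (i + 1)` with `2 ≤ i` has order `p` and
`|G : γ 2| = p²`: a cyclic `G / γ 2` would force `γ 2 = γ 3`. A maximal subgroup `H` contains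
`γ 2` with `H / γ 2` cyclic, and `γ 2` is central modulo `γ 3`, so `H' ≤ γ 3`. If `H ≠ G₁`, some
`s ∈ H` and `x ∈ γ 2` have `⁅s, x⁆ ∉ γ 4`, so `H' γ 4 = γ 3` since `|γ 3 : γ 4| = p`. As `H'` is
normal, `γ 3 = H' γ 4` forces the lower central series of `G / H'` to stabilise at `γ 3`, hence
`γ 3 ≤ H' γ n = H'`.
-/

open Subgroup
open scoped commutatorElement

theorem Nat.eq_pow_of_mul_eq_pow {p a b i j n : ℕ} (hp : 0 < p) (h : a * b = p ^ n)
    (ha : p ^ i ∣ a) (hb : p ^ j ∣ b) (hij : i + j = n) : a = p ^ i ∧ b = p ^ j := by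
  obtain ⟨a', rfl⟩ := ha
  obtain ⟨b', rfl⟩ := hb
  have hab : a' * b' = 1 := by
    refine Nat.eq_of_mul_eq_mul_left (pow_pos hp n) ?_
    calc p ^ n * (a' * b') = p ^ i * a' * (p ^ j * b') := by rw [← hij, pow_add]; ring
      _ = p ^ n * 1 := by rw [h, mul_one]
  simp [Nat.eq_one_of_mul_eq_one_right hab, Nat.eq_one_of_mul_eq_one_left hab]

namespace Subgroup

variable {G : Type*} [Group G]

theorem eq_of_lt_of_le_of_relIndex_prime {A B C : Subgroup G} (hAB : A < B) (hBC : B ≤ C)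
    (hAC : (A.relIndex C).Prime) : B = C := by
  rw [← relIndex_mul_relIndex A B C hAB.le hBC, Nat.prime_mul_iff] at hAC
  have hAB' : A.relIndex B ≠ 1 := fun h => hAB.not_ge (relIndex_eq_one.mp h)
  have hBC' : B.relIndex C = 1 := by tauto
  exact le_antisymm hBC (relIndex_eq_one.mp hBC')

theorem exists_closure_singleton_sup_eq {p : ℕ} (hp : p.Prime) {A B : Subgroup G} (hAB : A ≤ B)
    (h : A.relIndex B ∣ p) : ∃ s, closure {s} ⊔ A = B := by
  by_cases hBA : B ≤ A
  · exact ⟨1, by rw [closure_singleton_one, bot_sup_eq, le_antisymm hAB hBA]⟩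
  obtain ⟨s, hsB, hsA⟩ := SetLike.not_le_iff_exists.mp hBA
  have hprime : (A.relIndex B).Prime := by
    rcases (Nat.dvd_prime hp).mp h with h1 | hp'
    · exact absurd (relIndex_eq_one.mp h1) hBA
    · exact hp' ▸ hp
  refine ⟨s, eq_of_lt_of_le_of_relIndex_prime ?_ ?_ hprime⟩
  · exact lt_of_le_of_ne le_sup_right fun h =>
      hsA (h ▸ mem_sup_left (subset_closure rfl))
  · exact sup_le ((closure_le B).mpr (Set.singleton_subset_iff.mpr hsB)) hAB

/-- Modulo `⁅A, ⊤⁆` the subgroup `A` is central, so the images of `s` and `A` generate an abelian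
group. -/
theorem commutator_closure_singleton_sup_le (s : G) (A : Subgroup G) [A.Normal] :
    ⁅closure {s} ⊔ A, closure {s} ⊔ A⁆ ≤ ⁅A, ⊤⁆ := by
  let π := QuotientGroup.mk' ⁅A, (⊤ : Subgroup G)⁆
  have central : ∀ a ∈ A, ∀ g, Commute (π a) (π g) := fun a ha g => by
    rw [← commutatorElement_eq_one_iff_commute, ← map_commutatorElement, QuotientGroup.mk'_apply,
      QuotientGroup.eq_one_iff]
    exact commutator_mem_commutator ha (mem_top g)
  rw [commutator_le]
  rintro _ hx _ hy
  obtain ⟨_, hm, a, ha, rfl⟩ := mem_sup_of_normal_right.mp hx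
  obtain ⟨_, hk, b, hb, rfl⟩ := mem_sup_of_normal_right.mp hy
  obtain ⟨m, rfl⟩ := mem_closure_singleton.mp hm
  obtain ⟨k, rfl⟩ := mem_closure_singleton.mp hk
  rw [← QuotientGroup.eq_one_iff, ← QuotientGroup.mk'_apply, map_commutatorElement,
    commutatorElement_eq_one_iff_commute, map_mul, map_mul]
  refine Commute.mul_left (Commute.mul_right ?_ ((central b hb _).symm)) (central a ha _)
  simpa only [map_zpow] using (Commute.refl (π s)).zpow_zpow m k

theorem lowerCentralSeries_one_le_two_of_index_dvd {p : ℕ} (hp : p.Prime)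
    (h : ((⊤ : Subgroup G).lowerCentralSeries 1).index ∣ p) :
    (⊤ : Subgroup G).lowerCentralSeries 1 ≤ (⊤ : Subgroup G).lowerCentralSeries 2 := by
  obtain ⟨s, hs⟩ := exists_closure_singleton_sup_eq hp
    (le_top (a := (⊤ : Subgroup G).lowerCentralSeries 1)) (by rwa [relIndex_top_right])
  calc (⊤ : Subgroup G).lowerCentralSeries 1 = ⁅(⊤ : Subgroup G), ⊤⁆ := rfl
    _ = ⁅closure {s} ⊔ (⊤ : Subgroup G).lowerCentralSeries 1,
          closure {s} ⊔ (⊤ : Subgroup G).lowerCentralSeries 1⁆ := by rw [hs]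
    _ ≤ _ := commutator_closure_singleton_sup_le s _

theorem commutator_le_lowerCentralSeries_two {p : ℕ} (hp : p.Prime) {H : Subgroup G}
    (hγ : ((⊤ : Subgroup G).lowerCentralSeries 1).index = p ^ 2)
    (hγH : (⊤ : Subgroup G).lowerCentralSeries 1 ≤ H) (hH : H.index = p) :
    ⁅H, H⁆ ≤ (⊤ : Subgroup G).lowerCentralSeries 2 := by
  have hrel : ((⊤ : Subgroup G).lowerCentralSeries 1).relIndex H = p := by
    have h := relIndex_mul_index hγH
    rw [hH, hγ, pow_two] at h
    exact Nat.eq_of_mul_eq_mul_right hp.pos h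
  obtain ⟨s, hs⟩ := exists_closure_singleton_sup_eq hp hγH hrel.dvd
  exact hs ▸ commutator_closure_singleton_sup_le s _

theorem exists_commutator_notMem_of_not_le {k : ℕ} {N : Subgroup G}
    (h : ¬(⊤ : Subgroup G).lowerCentralSeries (k + 1) ≤ N) :
    ∃ g : G, ∃ x ∈ (⊤ : Subgroup G).lowerCentralSeries k, ⁅g, x⁆ ∉ N := by
  by_contra! hall
  refine h (commutator_le.mpr fun x hx g _ => ?_)
  rw [← commutatorElement_inv]
  exact inv_mem (hall g x hx)

variable (S : Subgroup G)

theorem lowerCentralSeries_add_eq_of_succ_eq {k : ℕ}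
    (h : S.lowerCentralSeries (k + 1) = S.lowerCentralSeries k) (m : ℕ) :
    S.lowerCentralSeries (k + m) = S.lowerCentralSeries k := by
  induction m with
  | zero => rfl
  | succ m ih => rw [← add_assoc, lowerCentralSeries_succ, ih, ← lowerCentralSeries_succ, h]

theorem lowerCentralSeries_succ_ne_of_le {k m : ℕ} (hkm : k ≤ m)
    (h : S.lowerCentralSeries (m + 1) ≠ S.lowerCentralSeries m) :
    S.lowerCentralSeries (k + 1) ≠ S.lowerCentralSeries k := fun hk => h <| by
  obtain ⟨d, rfl⟩ := Nat.exists_eq_add_of_le hkm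
  rw [add_assoc, S.lowerCentralSeries_add_eq_of_succ_eq hk,
    S.lowerCentralSeries_add_eq_of_succ_eq hk]

/-- Modulo `N`, the hypothesis says the lower central series stabilises at `k`. -/
theorem lowerCentralSeries_le_sup_add_of_le_sup (N : Subgroup G) [N.Normal] {k : ℕ}
    (h : S.lowerCentralSeries k ≤ N ⊔ S.lowerCentralSeries (k + 1)) (m : ℕ) :
    S.lowerCentralSeries k ≤ N ⊔ S.lowerCentralSeries (k + m) := by
  have hmap : ∀ {j l}, S.lowerCentralSeries j ≤ N ⊔ S.lowerCentralSeries l ↔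
      (S.map (QuotientGroup.mk' N)).lowerCentralSeries j ≤
        (S.map (QuotientGroup.mk' N)).lowerCentralSeries l := by
    intro j l
    rw [← map_lowerCentralSeries, ← map_lowerCentralSeries, map_le_map_iff, QuotientGroup.ker_mk',
      sup_comm]
  rw [hmap] at h ⊢
  exact (lowerCentralSeries_add_eq_of_succ_eq _
    (le_antisymm (lowerCentralSeries_antitone _ k.le_succ) h) m).ge

end Subgroup

namespace IsPGroup

variable {p : ℕ} [Fact p.Prime] {G : Type*} [Group G] [Finite G]

theorem dvd_relIndex_of_lt (hG : IsPGroup p G) {A B : Subgroup G} (hAB : A < B) :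
    p ∣ A.relIndex B := by
  obtain ⟨k, hk⟩ := (hG.to_subgroup B).index (A.subgroupOf B)
  have hk0 : k ≠ 0 := by
    rintro rfl
    exact hAB.not_ge (Subgroup.relIndex_eq_one.mp hk)
  rw [Subgroup.relIndex, hk]
  exact dvd_pow_self p hk0

theorem pow_dvd_relIndex_of_antitone (hG : IsPGroup p G) {f : ℕ → Subgroup G} (hf : Antitone f)
    {a b : ℕ} (hab : a ≤ b) (hne : ∀ k, a ≤ k → k < b → f (k + 1) ≠ f k) :
    p ^ (b - a) ∣ (f b).relIndex (f a) := by
  induction b, hab using Nat.le_induction with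
  | base => simp
  | succ b hab ih =>
    have hstep := hG.dvd_relIndex_of_lt
      (lt_of_le_of_ne (hf b.le_succ) (hne b hab b.lt_succ_self))
    rw [← Subgroup.relIndex_mul_relIndex _ _ _ (hf b.le_succ) (hf hab), Nat.sub_add_comm hab,
      pow_succ']
    exact mul_dvd_mul hstep (ih fun k hak hkb => hne k hak (hkb.trans b.lt_succ_self))

theorem commutator_le_of_index_eq (hG : IsPGroup p G) {H : Subgroup G} (hH : H.index = p) :
    commutator G ≤ H := by
  have hp := (Fact.out : p.Prime)
  obtain ⟨n, hn⟩ := IsPGroup.iff_card.mp hG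
  have hn0 : n ≠ 0 := by
    rintro rfl
    have := H.index_dvd_card
    rw [hH, hn, pow_zero] at this
    exact hp.one_lt.ne' (Nat.dvd_one.mp this)
  have : H.Normal := normal_of_index_eq_minFac_card (by rw [hH, hn, hp.pow_minFac hn0])
  have : IsCyclic (G ⧸ H) := isCyclic_of_prime_card (by rw [← index_eq_card, hH])
  exact Normal.quotient_commutative_iff_commutator_le.mp inferInstance

end IsPGroup

section MaximalClass

variable {p n : ℕ} [Fact p.Prime] {G : Type*} [Group G] [Finite G]

theorem index_lowerCentralSeries_of_maximalClass (hcard : Nat.card G = p ^ n) (hn : 3 ≤ n)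
    (hbot : (⊤ : Subgroup G).lowerCentralSeries (n - 1) = ⊥)
    (hne : (⊤ : Subgroup G).lowerCentralSeries (n - 2) ≠ ⊥) {k : ℕ} (hk1 : 1 ≤ k)
    (hkn : k ≤ n - 1) : ((⊤ : Subgroup G).lowerCentralSeries k).index = p ^ (k + 1) := by
  have hp := (Fact.out : p.Prime)
  have hG := IsPGroup.of_card hcard
  have hanti := (⊤ : Subgroup G).lowerCentralSeries_antitone
  have hstrict : ∀ j ≤ n - 2, (⊤ : Subgroup G).lowerCentralSeries (j + 1) ≠
      (⊤ : Subgroup G).lowerCentralSeries j := fun j hj =>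
    lowerCentralSeries_succ_ne_of_le ⊤ hj (by rwa [show n - 2 + 1 = n - 1 by omega, hbot, ne_comm])
  have hsq : p ^ 2 ∣ ((⊤ : Subgroup G).lowerCentralSeries 1).index := by
    obtain ⟨e, he⟩ := hG.index ((⊤ : Subgroup G).lowerCentralSeries 1)
    rw [he]
    refine pow_dvd_pow p (not_lt.mp fun he2 => hstrict 1 (by omega) (le_antisymm (hanti le_add_self)
      (lowerCentralSeries_one_le_two_of_index_dvd hp ?_)))
    rw [he]
    exact (pow_dvd_pow p (by omega : e ≤ 1)).trans (pow_one p).dvd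
  have hupper := hG.pow_dvd_relIndex_of_antitone hanti hk1 fun j _ hj => hstrict j (by omega)
  have hlower := hG.pow_dvd_relIndex_of_antitone hanti hkn fun j _ hj => hstrict j (by omega)
  have hprod : ((⊤ : Subgroup G).lowerCentralSeries (n - 1)).relIndex
      ((⊤ : Subgroup G).lowerCentralSeries k) * ((⊤ : Subgroup G).lowerCentralSeries k).index =
      p ^ n := by
    rw [relIndex_mul_index (hanti hkn), hbot, index_bot, hcard]
  have hdvd : p ^ (k + 1) ∣ ((⊤ : Subgroup G).lowerCentralSeries k).index := by
    rw [← relIndex_mul_index (hanti hk1), show k + 1 = k - 1 + 2 by omega, pow_add]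
    exact mul_dvd_mul hupper hsq
  exact (Nat.eq_pow_of_mul_eq_pow hp.pos hprod hlower hdvd (by omega)).2

theorem relIndex_lowerCentralSeries_succ_of_maximalClass (hcard : Nat.card G = p ^ n)
    (hn : 3 ≤ n) (hbot : (⊤ : Subgroup G).lowerCentralSeries (n - 1) = ⊥)
    (hne : (⊤ : Subgroup G).lowerCentralSeries (n - 2) ≠ ⊥) {k : ℕ} (hk1 : 1 ≤ k)
    (hkn : k ≤ n - 2) :
    ((⊤ : Subgroup G).lowerCentralSeries (k + 1)).relIndex
      ((⊤ : Subgroup G).lowerCentralSeries k) = p := by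
  have h := relIndex_mul_index ((⊤ : Subgroup G).lowerCentralSeries_antitone k.le_succ)
  rw [index_lowerCentralSeries_of_maximalClass hcard hn hbot hne hk1 (by omega),
    index_lowerCentralSeries_of_maximalClass hcard hn hbot hne (by omega) (by omega),
    pow_succ _ (k + 1)] at h
  exact Nat.eq_of_mul_eq_mul_right (pow_pos (Fact.out : p.Prime).pos _) (h.trans (mul_comm _ _))

end MaximalClass

theorem stmt11 {p n : ℕ} (hp : p.Prime) {G : Type} [Group G] [Finite G]
    (hcard : Nat.card G = p ^ n) (hn : 4 ≤ n)
    -- `G` has maximal class, i.e. nilpotency class exactly `n - 1`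
    (hmc₁ : (⊤ : Subgroup G).lowerCentralSeries (n - 1) = ⊥) (hmc₂ : (⊤ : Subgroup G).lowerCentralSeries (n - 2) ≠ ⊥)
    -- `G1 = C_G(γ₂(G)/γ₄(G))`
    (G1 : Subgroup G)
    (hG1 : ∀ g : G, g ∈ G1 ↔
      ∀ x ∈ (⊤ : Subgroup G).lowerCentralSeries 1, ⁅g, x⁆ ∈ (⊤ : Subgroup G).lowerCentralSeries 3)
    (H : Subgroup G) (hHmax : H.index = p) (hH : H ≠ G1) :
    Subgroup.map H.subtype (commutator H) = (⊤ : Subgroup G).lowerCentralSeries 2 := by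
  have : Fact p.Prime := ⟨hp⟩
  set γ := (⊤ : Subgroup G).lowerCentralSeries
  have hγH : γ 1 ≤ H := (IsPGroup.of_card hcard).commutator_le_of_index_eq hHmax
  have : H.Normal := .of_commutator_le _ hγH
  have hHH : ⁅H, H⁆ ≤ γ 2 := commutator_le_lowerCentralSeries_two hp
    (index_lowerCentralSeries_of_maximalClass hcard (by omega) hmc₁ hmc₂ le_rfl (by omega))
    hγH hHmax
  have hrel : (γ 3).relIndex (γ 2) = p := relIndex_lowerCentralSeries_succ_of_maximalClass
    hcard (by omega) hmc₁ hmc₂ (by omega) (by omega)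
  obtain ⟨s, hsH, hsG1⟩ : ∃ s ∈ H, s ∉ G1 := by
    refine SetLike.not_le_iff_exists.mp fun hle => ?_
    have hG1top : G1 = ⊤ := eq_of_lt_of_le_of_relIndex_prime (lt_of_le_of_ne hle hH) le_top
      (by rwa [relIndex_top_right, hHmax])
    obtain ⟨g, x, hx, hgx⟩ := exists_commutator_notMem_of_not_le (k := 1) (N := γ 3)
      fun h => hp.one_lt.ne' (hrel ▸ relIndex_eq_one.mpr h)
    exact hgx ((hG1 g).mp (hG1top ▸ mem_top g) x hx)
  obtain ⟨x, hx, hsx⟩ : ∃ x ∈ γ 1, ⁅s, x⁆ ∉ γ 3 := by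
    simpa only [hG1 s, not_forall, exists_prop] using hsG1
  have hsup : ⁅H, H⁆ ⊔ γ 3 = γ 2 := by
    refine eq_of_lt_of_le_of_relIndex_prime (lt_of_le_of_ne le_sup_right fun h => hsx ?_)
      (sup_le hHH ((⊤ : Subgroup G).lowerCentralSeries_antitone (by omega))) (hrel ▸ hp)
    exact h ▸ mem_sup_left (commutator_mem_commutator hsH (hγH hx))
  have hle : γ 2 ≤ ⁅H, H⁆ ⊔ γ (2 + (n - 3)) :=
    lowerCentralSeries_le_sup_add_of_le_sup ⊤ ⁅H, H⁆ hsup.ge (n - 3)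
  rw [show 2 + (n - 3) = n - 1 by omega, hmc₁, sup_bot_eq] at hle
  rw [map_subtype_commutator, le_antisymm hHH hle]
end

section
/- Let G be a finite p-group of maximal class of order p^n ≥ p^4 with degree of commutativity ℓ(G) = 0 (i.e., C_G(γ_{n−2}(G)) ≠ G_1). Then there is no simple virtual endomorphism φ : G_1 → G. -/
/-!
The last nontrivial term `K = γ_{n-1}(G)` of the lower central series has order `p` and is
central. Since `ℓ(G) = 0`, the centre of `G₁` is exactly `K`: it is a normal subgroup of `G` lying
in `γ₂(G)` but not containing `γ_{n-2}(G)`, and in a group of maximal class such a subgroup lies in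
`γ_{n-1}(G)`. Hence `K` is invariant under every `φ : G₁ → G`. If `φ` is not injective, its kernel
meets the centre `K` of the `p`-group `G₁`, which has prime order, so `φ` kills `K`. If `φ` is
injective, its image has index `p`, so it contains `γ₂(G) ⊇ K`, and the preimage of the central
subgroup `K` is central in `G₁`, i.e. contained in `K`; comparing orders, `φ(K) = K`.
-/

/-- A virtual endomorphism `φ : H → G` is *simple* if the only subgroup of `H`
which is normal in `G` and `φ`-invariant is the trivial subgroup. -/
def IsSimpleVirtualEndo {G : Type*} [Group G] (H : Subgroup G) (φ : H →* G) : Prop :=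
  ∀ K : Subgroup G, K ≤ H → K.Normal → Subgroup.map φ (K.subgroupOf H) ≤ K → K = ⊥

open scoped commutatorElement

-- Mathlib's lower central series starts at `γ G 0 = G`, so `γ G k` is the paper's `γ_{k+1}(G)`.
local notation "γ" G:max k:max => Subgroup.lowerCentralSeries (⊤ : Subgroup G) k

theorem Nat.eq_sub_of_forall_succ_lt {f : ℕ → ℕ} {m : ℕ} (hf : ∀ i < m, f (i + 1) < f i)
    (h0 : f 0 ≤ m) {i : ℕ} (hi : i ≤ m) : f i = m - i := by
  have hupper : ∀ i ≤ m, f i + i ≤ f 0 := by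
    intro i hi
    induction i with
    | zero => rfl
    | succ i ih => have := hf i hi; have := ih (by omega); omega
  have hlower : ∀ d ≤ m, d ≤ f (m - d) := by
    intro d hd
    induction d with
    | zero => exact Nat.zero_le _
    | succ d ih =>
      have := hf (m - (d + 1)) (by omega)
      rw [show m - (d + 1) + 1 = m - d by omega] at this
      have := ih (by omega)
      omega
  have := hupper i hi
  have := hlower (m - i) (by omega)
  rw [Nat.sub_sub_self hi] at this
  omega

namespace Subgroup

variable {G : Type*} [Group G]

theorem commutator_commutator_le_of_rotate {H K L N : Subgroup G} [N.Normal]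
    (h1 : ⁅⁅K, L⁆, H⁆ ≤ N) (h2 : ⁅⁅L, H⁆, K⁆ ≤ N) : ⁅⁅H, K⁆, L⁆ ≤ N := by
  rw [← QuotientGroup.ker_mk' N, ← map_eq_bot_iff] at h1 h2 ⊢
  simp only [map_commutator] at h1 h2 ⊢
  exact commutator_commutator_eq_bot_of_rotate h1 h2

theorem commutator_lowerCentralSeries_le (i j : ℕ) : ⁅γ G i, γ G j⁆ ≤ γ G (i + j + 1) := by
  induction j generalizing i with
  | zero => rfl
  | succ j ih =>
    rw [lowerCentralSeries_succ, commutator_comm]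
    apply commutator_commutator_le_of_rotate
    · rw [commutator_comm ⊤, ← lowerCentralSeries_succ]
      exact (ih (i + 1)).trans_eq (congrArg _ (by omega))
    · exact (commutator_mono (ih i) le_rfl).trans_eq (lowerCentralSeries_succ _ _).symm

theorem lowerCentralSeries_le_center_iff {k : ℕ} : γ G k ≤ center G ↔ γ G (k + 1) = ⊥ := by
  rw [lowerCentralSeries_succ, commutator_eq_bot_iff_le_centralizer, coe_top, centralizer_univ]

theorem map_lowerCentralSeries_of_surjective {H : Type*} [Group H] {f : G →* H}
    (hf : Function.Surjective f) (k : ℕ) : (γ G k).map f = γ H k := by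
  rw [map_lowerCentralSeries, map_top_of_surjective f hf]

theorem map_lowerCentralSeries_le_center {N : Subgroup G} [N.Normal] {k : ℕ}
    (h : γ G (k + 1) ≤ N) : (γ G k).map (QuotientGroup.mk' N) ≤ center (G ⧸ N) := by
  rw [map_lowerCentralSeries_of_surjective (QuotientGroup.mk'_surjective N),
    lowerCentralSeries_le_center_iff,
    ← map_lowerCentralSeries_of_surjective (QuotientGroup.mk'_surjective N), map_eq_bot_iff,
    QuotientGroup.ker_mk']
  exact h

theorem lowerCentralSeries_eq_bot_of_succ_eq {k m : ℕ} (h : γ G (k + 1) = γ G k)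
    (hm : γ G m = ⊥) : γ G k = ⊥ := by
  have hconst : ∀ i, γ G (k + i) = γ G k := by
    intro i
    induction i with
    | zero => rfl
    | succ i ih => rw [← add_assoc, lowerCentralSeries_succ, ih, ← lowerCentralSeries_succ, h]
  rw [← hconst m, eq_bot_iff, ← hm]
  exact lowerCentralSeries_antitone _ (Nat.le_add_left m k)

theorem lowerCentralSeries_le_of_le_sup {N : Subgroup G} [N.Normal] {k m : ℕ} (hm : γ G m = ⊥)
    (h : γ G k ≤ N ⊔ γ G (k + 1)) : γ G k ≤ N := by
  have hmk := QuotientGroup.mk'_surjective N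
  have hmap := map_lowerCentralSeries_of_surjective hmk
  -- modulo `N` the lower central series stalls at `k`, so it vanishes there
  have hle : γ (G ⧸ N) k ≤ γ (G ⧸ N) (k + 1) := by
    rw [← hmap, ← hmap]
    simpa only [map_sup, QuotientGroup.map_mk'_self, bot_sup_eq]
      using map_mono (f := QuotientGroup.mk' N) h
  have hbot := lowerCentralSeries_eq_bot_of_succ_eq
    (le_antisymm (lowerCentralSeries_antitone _ k.le_succ) hle) (by rw [← hmap, hm, map_bot])
  rwa [← hmap, map_eq_bot_iff, QuotientGroup.ker_mk'] at hbot

theorem lowerCentralSeries_one_le_two_of_isCyclic [IsCyclic (G ⧸ γ G 1)] : γ G 1 ≤ γ G 2 := by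
  have hker : (QuotientGroup.map _ _ (MonoidHom.id G)
      (by rw [comap_id]; exact lowerCentralSeries_antitone _ one_le_two) :
      G ⧸ γ G 2 →* G ⧸ γ G 1).ker ≤ center (G ⧸ γ G 2) := by
    rw [QuotientGroup.ker_map, comap_id]
    exact map_lowerCentralSeries_le_center le_rfl
  exact Normal.quotient_commutative_iff_commutator_le.mp
    (MonoidHom.isMulCommutative_of_isCyclic_of_ker_le_center _ hker)

theorem eq_or_eq_of_relIndex_eq_prime {p : ℕ} (hp : p.Prime) {A B C : Subgroup G}
    (hAC : A ≤ C) (hCB : C ≤ B) (h : A.relIndex B = p) : C = A ∨ C = B := by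
  have hmul := relIndex_mul_relIndex A C B hAC hCB
  rw [h] at hmul
  rcases (Nat.prime_mul_iff.mp (hmul ▸ hp)) with ⟨-, h1⟩ | ⟨-, h1⟩
  · exact Or.inr (le_antisymm hCB (relIndex_eq_one.mp h1))
  · exact Or.inl (le_antisymm (relIndex_eq_one.mp h1) hAC)

theorem comap_center_le_center {H : Type*} [Group H] {f : G →* H}
    (hf : Function.Injective f) : (center H).comap f ≤ center G := by
  intro u hu
  rw [mem_center_iff]
  intro v
  apply hf
  rw [map_mul, map_mul]
  exact mem_center_iff.mp hu (f v)

theorem commutatorElement_mem_iff_mem_comap_centralizer {N : Subgroup G} [N.Normal]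
    {g y : G} : ⁅g, y⁆ ∈ N ↔ y ∈ (centralizer {(g : G ⧸ N)}).comap (QuotientGroup.mk' N) := by
  rw [mem_comap, mem_centralizer_iff_commutator_eq_one]
  simp only [Set.mem_singleton_iff, forall_eq, QuotientGroup.mk'_apply]
  rw [← QuotientGroup.eq_one_iff, ← QuotientGroup.mk'_apply, map_commutatorElement]
  rfl

theorem commutatorElement_mem_lowerCentralSeries_succ {k : ℕ} (g : G) {x : G}
    (hx : x ∈ γ G k) : ⁅g, x⁆ ∈ γ G (k + 1) := by
  rw [← commutatorElement_inv]
  exact inv_mem (commutator_mem_commutator hx (mem_top g))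

def commutatorHom {k : ℕ} (x : G) (hx : x ∈ γ G k) : G →* G ⧸ γ G (k + 2) where
  toFun g := (⁅g, x⁆ : G)
  map_one' := by rw [commutatorElement_one_left]; rfl
  map_mul' g h := by
    have hcentral : ∀ y : G, ((⁅y, x⁆ : G) : G ⧸ γ G (k + 2)) ∈ center _ := fun y =>
      map_lowerCentralSeries_le_center le_rfl
        ⟨_, commutatorElement_mem_lowerCentralSeries_succ y hx, rfl⟩
    have hmul : ⁅g * h, x⁆ = g * ⁅h, x⁆ * g⁻¹ * ⁅g, x⁆ := by group
    rw [hmul, QuotientGroup.mk_mul, QuotientGroup.mk_mul, QuotientGroup.mk_mul,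
      QuotientGroup.mk_inv, mem_center_iff.mp (hcentral h), mul_inv_cancel_right]
    exact (mem_center_iff.mp (hcentral h) _).symm

theorem mem_ker_commutatorHom {k : ℕ} {x : G} (hx : x ∈ γ G k) {g : G} :
    g ∈ (commutatorHom x hx).ker ↔ ⁅g, x⁆ ∈ γ G (k + 2) :=
  QuotientGroup.eq_one_iff _

theorem index_ker_commutatorHom_le [Finite G] {k : ℕ} {x : G} (hx : x ∈ γ G k) :
    (commutatorHom x hx).ker.index ≤ (γ G (k + 2)).relIndex (γ G (k + 1)) := by
  have hrange : (commutatorHom x hx).range ≤ (γ G (k + 1)).map (QuotientGroup.mk' _) := by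
    rintro _ ⟨g, rfl⟩
    exact ⟨_, commutatorElement_mem_lowerCentralSeries_succ g hx, rfl⟩
  calc (commutatorHom x hx).ker.index = Nat.card (commutatorHom x hx).range := index_ker _
    _ ≤ Nat.card ((γ G (k + 1)).map (QuotientGroup.mk' _)) := card_le_of_le hrange
    _ = _ := by rw [← relIndex_ker, QuotientGroup.ker_mk']

theorem lowerCentralSeries_le_of_forall {G1 : Subgroup G}
    (hG1 : ∀ g : G, g ∈ G1 ↔ ∀ x ∈ γ G 1, ⁅g, x⁆ ∈ γ G 3) {k : ℕ} (hk : 1 ≤ k) :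
    γ G k ≤ G1 := fun a ha =>
  (hG1 a).mpr fun _ hx => commutator_lowerCentralSeries_le 1 1
    (commutator_mem_commutator (lowerCentralSeries_antitone _ hk ha) hx)

theorem center_eq_centralizer_subgroupOf (H : Subgroup G) :
    center H = (centralizer H).subgroupOf H := by
  ext u
  rw [mem_center_iff, mem_subgroupOf, mem_centralizer_iff, Subtype.forall]
  exact forall₂_congr fun h hh => Subtype.ext_iff

end Subgroup

namespace IsPGroup

open Subgroup

variable {G : Type*} [Group G] {p : ℕ} [Fact p.Prime] [Finite G]

theorem inf_center_ne_bot (hG : IsPGroup p G) {N : Subgroup G} [N.Normal] (hN : N ≠ ⊥) :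
    N ⊓ center G ≠ ⊥ := by
  have hdvd : p ∣ Nat.card N :=
    (hG.to_subgroup N).card_eq_or_dvd.resolve_left fun h => hN (eq_bot_of_card_eq N h)
  -- conjugation on `N` has `≡ |N| ≡ 0 (mod p)` fixed points, one of which is `1`
  have hconj : IsPGroup p (ConjAct G) := hG.of_equiv ConjAct.toConjAct
  obtain ⟨b, hb, hb1⟩ := hconj.exists_fixed_point_of_prime_dvd_card_of_fixed_point N hdvd
    (a := 1) (fun g => smul_one g)
  have hbc : (b : G) ∈ center G := mem_center_iff.mpr fun g => by
    have h := congrArg Subtype.val (hb (ConjAct.toConjAct g))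
    rw [ConjAct.Subgroup.val_conj_smul, ConjAct.toConjAct_smul] at h
    exact mul_inv_eq_iff_eq_mul.mp h
  intro h
  exact hb1 (Subtype.ext ((mem_bot.mp (h ▸ mem_inf.mpr ⟨b.2, hbc⟩)).symm))

theorem center_le_ker (hG : IsPGroup p G) (hZ : Nat.card (center G) = p) {H : Type*} [Group H]
    {f : G →* H} (hf : ¬ Function.Injective f) : center G ≤ f.ker := by
  have hne : f.ker ⊓ center G ≠ ⊥ := hG.inf_center_ne_bot (mt f.ker_eq_bot_iff.mp hf)
  rcases eq_or_eq_of_relIndex_eq_prime (Fact.out : p.Prime) bot_le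
    (inf_le_right : f.ker ⊓ center G ≤ center G) (by rw [relIndex_bot_left, hZ]) with h | h
  · exact absurd h hne
  · exact inf_eq_right.mp h

theorem commutator_le_of_index_eq_s16 (hG : IsPGroup p G) {M : Subgroup G} (hM : M.index = p) :
    _root_.commutator G ≤ M := by
  obtain ⟨k, hk⟩ := IsPGroup.iff_card.mp hG
  have hk0 : k ≠ 0 := by
    rintro rfl
    have := hM ▸ M.index_dvd_card
    rw [hk, pow_zero, Nat.dvd_one] at this
    exact (Fact.out : p.Prime).one_lt.ne' this
  have : M.Normal :=
    normal_of_index_eq_minFac_card (by rw [hM, hk, Nat.Prime.pow_minFac Fact.out hk0])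
  have : IsCyclic (G ⧸ M) := isCyclic_of_prime_card (p := p) (by rw [← index_eq_card, hM])
  exact Normal.quotient_commutative_iff_commutator_le.mp inferInstance

end IsPGroup

structure IsMaximalClass (p n : ℕ) (G : Type*) [Group G] : Prop where
  card_eq : Nat.card G = p ^ n
  lowerCentralSeries_eq_bot : γ G (n - 1) = ⊥
  lowerCentralSeries_ne_bot : γ G (n - 2) ≠ ⊥

namespace IsMaximalClass

open Subgroup

variable {G : Type*} [Group G] {p n : ℕ}

theorem lowerCentralSeries_succ_lt (hG : IsMaximalClass p n G) {k : ℕ} (hk : k ≤ n - 2) :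
    γ G (k + 1) < γ G k := by
  refine lt_of_le_of_ne (Subgroup.lowerCentralSeries_antitone _ k.le_succ) fun h =>
    hG.lowerCentralSeries_ne_bot ?_
  rw [eq_bot_iff, ← lowerCentralSeries_eq_bot_of_succ_eq h hG.lowerCentralSeries_eq_bot]
  exact Subgroup.lowerCentralSeries_antitone _ hk

theorem lowerCentralSeries_le_center (hG : IsMaximalClass p n G) (hn : 2 ≤ n) :
    γ G (n - 2) ≤ center G := by
  rw [lowerCentralSeries_le_center_iff, show n - 2 + 1 = n - 1 by omega]
  exact hG.lowerCentralSeries_eq_bot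

variable [Fact p.Prime]

theorem not_le_centralizer (hG : IsMaximalClass p n G) (hn : 3 ≤ n) {G1 : Subgroup G}
    (hidx : G1.index = p) (hl : centralizer (γ G (n - 3) : Set G) ≠ G1) :
    ¬ G1 ≤ centralizer (γ G (n - 3) : Set G) := fun hle => by
  rcases eq_or_eq_of_relIndex_eq_prime (Fact.out : p.Prime) hle le_top
    (by rw [relIndex_top_right, hidx]) with h | h
  · exact hl h
  · apply hG.lowerCentralSeries_ne_bot
    rw [show n - 2 = n - 3 + 1 by omega, ← lowerCentralSeries_le_center_iff]
    exact fun x hx => mem_center_iff.mpr fun g =>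
      (mem_centralizer_iff.mp (h.ge (mem_top g)) x hx).symm

variable [Finite G]

theorem card_lowerCentralSeries (hG : IsMaximalClass p n G) (hn : 3 ≤ n) {k : ℕ}
    (hk : 1 ≤ k) : Nat.card (γ G k) = p ^ (n - 1 - k) := by
  have hp : p.Prime := Fact.out
  choose e he using fun k =>
    IsPGroup.iff_card.mp ((IsPGroup.of_card hG.card_eq).to_subgroup (γ G k))
  -- `e` drops strictly from `e 0 = n` along `γ G 0 > ⋯ > γ G (n - 1) = ⊥`, and by at least `2`
  -- at the first step because `G ⧸ γ G 1` is not cyclic; so it drops by exactly `1` afterwards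
  have he_lt : ∀ k ≤ n - 2, e (k + 1) < e k := fun k hk => by
    have h := hG.lowerCentralSeries_succ_lt hk
    rw [← Nat.pow_lt_pow_iff_right hp.one_lt, ← he, ← he]
    exact lt_of_le_of_ne (card_le_of_le h.le) fun hc => h.ne (eq_of_le_of_card_ge h.le hc.ge)
  have he0 : e 0 = n := Nat.pow_right_injective hp.two_le
    (show p ^ e 0 = p ^ n by rw [← he, Subgroup.lowerCentralSeries_zero, card_top, hG.card_eq])
  have he1 : e 1 ≤ n - 2 := by
    by_contra h
    have hidx : (γ G 1).index = p := by
      have hmul := card_mul_index (γ G 1)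
      have := he_lt 0 (Nat.zero_le _)
      rw [zero_add] at this
      rw [he, hG.card_eq, show e 1 = n - 1 by omega, ← pow_sub_mul_pow p (by omega : 1 ≤ n),
        pow_one] at hmul
      exact Nat.eq_of_mul_eq_mul_left (pow_pos hp.pos _) hmul
    have : IsCyclic (G ⧸ γ G 1) :=
      isCyclic_of_prime_card (p := p) (by rw [← index_eq_card, hidx])
    exact (hG.lowerCentralSeries_succ_lt (k := 1) (by omega)).not_ge
      lowerCentralSeries_one_le_two_of_isCyclic
  rcases le_or_gt k (n - 1) with hkn | hkn
  · obtain ⟨i, rfl⟩ : ∃ i, k = i + 1 := ⟨k - 1, by omega⟩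
    rw [he, Nat.eq_sub_of_forall_succ_lt (f := fun i => e (i + 1))
      (fun i hi => he_lt (i + 1) (by omega)) he1 (by omega)]
    congr 1
    omega
  · have hbot : γ G k = ⊥ := le_bot_iff.mp
      ((Subgroup.lowerCentralSeries_antitone _ hkn.le).trans hG.lowerCentralSeries_eq_bot.le)
    rw [hbot, card_bot, show n - 1 - k = 0 by omega, pow_zero]

theorem relIndex_lowerCentralSeries_succ (hG : IsMaximalClass p n G) (hn : 3 ≤ n) {k : ℕ}
    (hk1 : 1 ≤ k) (hk : k ≤ n - 2) : (γ G (k + 1)).relIndex (γ G k) = p := by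
  have h := relIndex_mul_relIndex ⊥ (γ G (k + 1)) (γ G k) bot_le
    (Subgroup.lowerCentralSeries_antitone _ k.le_succ)
  rw [relIndex_bot_left, relIndex_bot_left, hG.card_lowerCentralSeries hn hk1,
    hG.card_lowerCentralSeries hn (by omega), show n - 1 - k = n - 1 - (k + 1) + 1 by omega,
    pow_succ] at h
  exact Nat.eq_of_mul_eq_mul_left (pow_pos (Fact.out : p.Prime).pos _) h

theorem index_lowerCentralSeries_one (hG : IsMaximalClass p n G) (hn : 3 ≤ n) :
    (γ G 1).index = p ^ 2 := by
  have h := card_mul_index (γ G 1)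
  rw [hG.card_lowerCentralSeries hn le_rfl, hG.card_eq,
    ← pow_sub_mul_pow p (by omega : 2 ≤ n), show n - 1 - 1 = n - 2 by omega] at h
  exact Nat.eq_of_mul_eq_mul_left (pow_pos (Fact.out : p.Prime).pos _) h

theorem index_eq_of_forall (hG : IsMaximalClass p n G) (hn : 4 ≤ n) {G1 : Subgroup G}
    (hG1 : ∀ g : G, g ∈ G1 ↔ ∀ x ∈ γ G 1, ⁅g, x⁆ ∈ γ G 3) : G1.index = p := by
  have hp : p.Prime := Fact.out
  -- `G1` is the kernel of `g ↦ ⁅g, x⁆ γ G 3` for any `x` generating `γ G 1` modulo `γ G 2`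
  obtain ⟨x, hx1, hx2⟩ :=
    SetLike.exists_of_lt (hG.lowerCentralSeries_succ_lt (k := 1) (by omega))
  have hsup : zpowers x ⊔ γ G 2 = γ G 1 :=
    (eq_or_eq_of_relIndex_eq_prime hp le_sup_right
      (sup_le (zpowers_le.mpr hx1) (Subgroup.lowerCentralSeries_antitone _ one_le_two))
      (hG.relIndex_lowerCentralSeries_succ (by omega) le_rfl (by omega))).resolve_left
      fun h => hx2 (h ▸ mem_sup_left (mem_zpowers x))
  have hker : (commutatorHom x hx1).ker = G1 := by
    ext g
    rw [mem_ker_commutatorHom, hG1]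
    refine ⟨fun hg y hy => ?_, fun hg => hg x hx1⟩
    have hS : γ G 1 ≤ (centralizer {(g : G ⧸ γ G 3)}).comap (QuotientGroup.mk' _) := by
      rw [← hsup]
      refine sup_le (zpowers_le.mpr ?_) fun c hc => ?_ <;>
        rw [← commutatorElement_mem_iff_mem_comap_centralizer]
      exacts [hg, commutatorElement_mem_lowerCentralSeries_succ g hc]
    exact commutatorElement_mem_iff_mem_comap_centralizer.mpr (hS hy)
  have hle : G1.index ≤ p := hker ▸ (index_ker_commutatorHom_le hx1).trans_eq
    (hG.relIndex_lowerCentralSeries_succ (by omega) (by omega) (by omega))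
  have hne : G1.index ≠ 1 := by
    rw [Ne, index_eq_one]
    intro htop
    apply (hG.lowerCentralSeries_succ_lt (k := 2) (by omega)).not_ge
    rw [Subgroup.lowerCentralSeries_succ, commutator_le]
    intro y hy g _
    rw [← commutatorElement_inv]
    exact inv_mem ((hG1 g).mp (htop ▸ mem_top g) y hy)
  obtain ⟨j, hj⟩ := (IsPGroup.of_card hG.card_eq).index G1
  have hj0 : j ≠ 0 := by
    rintro rfl
    exact hne (hj.trans (pow_zero p))
  exact le_antisymm hle (hj ▸ Nat.le_of_dvd (pow_pos hp.pos j) (dvd_pow_self p hj0))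

theorem lowerCentralSeries_le_of_le_of_not_le (hG : IsMaximalClass p n G) (hn : 3 ≤ n)
    {N : Subgroup G} [N.Normal] {j : ℕ} (hj1 : 1 ≤ j) (hj : j ≤ n - 2) (hNj : N ≤ γ G j)
    (hN : ¬ N ≤ γ G (j + 1)) : γ G j ≤ N := by
  refine lowerCentralSeries_le_of_le_sup hG.lowerCentralSeries_eq_bot (le_of_eq ?_)
  refine ((eq_or_eq_of_relIndex_eq_prime Fact.out le_sup_right
    (sup_le hNj (Subgroup.lowerCentralSeries_antitone _ j.le_succ))
    (hG.relIndex_lowerCentralSeries_succ hn hj1 hj)).resolve_left fun h => ?_).symm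
  exact hN (le_sup_left.trans h.le)

theorem le_lowerCentralSeries_of_not_le (hG : IsMaximalClass p n G) (hn : 3 ≤ n)
    {N : Subgroup G} [N.Normal] (hN1 : N ≤ γ G 1) (hN : ¬ γ G (n - 3) ≤ N) :
    N ≤ γ G (n - 2) := by
  suffices ∀ j, 1 ≤ j → j ≤ n - 2 → N ≤ γ G j from this (n - 2) (by omega) le_rfl
  intro j hj
  induction j, hj using Nat.le_induction with
  | base => exact fun _ => hN1
  | succ j hj ih =>
    intro hjn
    by_contra h
    exact hN ((Subgroup.lowerCentralSeries_antitone _ (by omega)).trans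
      (hG.lowerCentralSeries_le_of_le_of_not_le hn hj (by omega) (ih (by omega)) h))

theorem inf_centralizer_eq (hG : IsMaximalClass p n G) (hn : 4 ≤ n) {G1 : Subgroup G}
    (hG1 : ∀ g : G, g ∈ G1 ↔ ∀ x ∈ γ G 1, ⁅g, x⁆ ∈ γ G 3)
    (hl : centralizer (γ G (n - 3) : Set G) ≠ G1) :
    G1 ⊓ centralizer G1 = γ G (n - 2) := by
  have hγG1 := lowerCentralSeries_le_of_forall hG1 le_rfl
  have : G1.Normal := Normal.of_commutator_le G hγG1
  have hidx := hG.index_eq_of_forall hn hG1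
  have hC := hG.not_le_centralizer (by omega) hidx hl
  set Z := G1 ⊓ centralizer G1
  have hZ1 : Z ≤ γ G 1 := by
    by_contra hZ
    have hrel : (γ G 1).relIndex G1 = p := by
      have h := relIndex_mul_index hγG1
      rw [hidx, hG.index_lowerCentralSeries_one (by omega), pow_two] at h
      exact Nat.eq_of_mul_eq_mul_right (Fact.out : p.Prime).pos h
    rcases eq_or_eq_of_relIndex_eq_prime Fact.out le_sup_right (sup_le inf_le_left hγG1) hrel
      with h | h
    · exact hZ (le_sup_left.trans h.le)
    · apply hC
      rw [← h]
      refine sup_le (inf_le_right.trans (centralizer_le ?_)) ?_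
      · exact (Subgroup.lowerCentralSeries_antitone _ (by omega)).trans hγG1
      · rw [← commutator_eq_bot_iff_le_centralizer, eq_bot_iff, ← hG.lowerCentralSeries_eq_bot]
        exact (commutator_lowerCentralSeries_le 1 (n - 3)).trans
          (Subgroup.lowerCentralSeries_antitone _ (by omega))
  refine le_antisymm (hG.le_lowerCentralSeries_of_not_le (by omega) hZ1 fun h =>
    hC (le_centralizer_iff.mp (h.trans inf_le_right))) (le_inf ?_ ?_)
  · exact lowerCentralSeries_le_of_forall hG1 (by omega)
  · exact (hG.lowerCentralSeries_le_center (by omega)).trans (center_le_centralizer _)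

theorem map_subgroupOf_lowerCentralSeries_le (hG : IsMaximalClass p n G) (hn : 4 ≤ n)
    {G1 : Subgroup G} (hG1 : ∀ g : G, g ∈ G1 ↔ ∀ x ∈ γ G 1, ⁅g, x⁆ ∈ γ G 3)
    (hl : centralizer (γ G (n - 3) : Set G) ≠ G1) (φ : G1 →* G) :
    ((γ G (n - 2)).subgroupOf G1).map φ ≤ γ G (n - 2) := by
  have hpG := IsPGroup.of_card hG.card_eq
  have hZ : center G1 = (γ G (n - 2)).subgroupOf G1 := by
    rw [center_eq_centralizer_subgroupOf, ← inf_subgroupOf_left, hG.inf_centralizer_eq hn hG1 hl]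
  have hcardK : Nat.card (γ G (n - 2)) = p := by
    rw [hG.card_lowerCentralSeries (by omega) (by omega), show n - 1 - (n - 2) = 1 by omega,
      pow_one]
  have hcardZ : Nat.card (center G1) = p := by
    rw [hZ, Nat.card_congr (subgroupOfEquivOfLe (lowerCentralSeries_le_of_forall hG1
      (by omega))).toEquiv, hcardK]
  by_cases hφ : Function.Injective φ
  · have hrange : φ.range.index = p := by
      rw [← hG.index_eq_of_forall hn hG1]
      refine Nat.eq_of_mul_eq_mul_left (Nat.card_pos (α := G1)) ?_
      rw [card_mul_index, ← Nat.card_range_of_injective hφ]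
      exact card_mul_index φ.range
    have hKr : γ G (n - 2) ≤ φ.range :=
      (Subgroup.lowerCentralSeries_antitone _ (by omega) : γ G (n - 2) ≤ γ G 1).trans
        (hpG.commutator_le_of_index_eq_s16 hrange)
    have hle : γ G (n - 2) ≤ ((γ G (n - 2)).subgroupOf G1).map φ := by
      rw [← hZ, ← map_comap_eq_self hKr]
      exact map_mono ((comap_mono (hG.lowerCentralSeries_le_center (by omega))).trans
        (comap_center_le_center hφ))
    refine (eq_of_le_of_card_ge hle ?_).ge
    rw [card_map_of_injective hφ, ← hZ, hcardZ, hcardK]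
  · rw [← hZ, map_le_iff_le_comap]
    exact ((hpG.to_subgroup G1).center_le_ker hcardZ hφ).trans (φ.ker_le_comap _)

end IsMaximalClass

theorem stmt16 {p n : ℕ} (hp : p.Prime) {G : Type} [Group G] [Finite G]
    (hcard : Nat.card G = p ^ n) (hn : 4 ≤ n)
    -- `G` has maximal class, i.e. nilpotency class exactly `n - 1`
    (hmc₁ : Subgroup.lowerCentralSeries (⊤ : Subgroup G) (n - 1) = ⊥) (hmc₂ : Subgroup.lowerCentralSeries (⊤ : Subgroup G) (n - 2) ≠ ⊥)
    -- `G1 = C_G(γ₂(G)/γ₄(G))`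
    (G1 : Subgroup G)
    (hG1 : ∀ g : G, g ∈ G1 ↔
      ∀ x ∈ Subgroup.lowerCentralSeries (⊤ : Subgroup G) 1, ⁅g, x⁆ ∈ Subgroup.lowerCentralSeries (⊤ : Subgroup G) 3)
    -- degree of commutativity 0: `C_G(γ_{n-2}(G)) ≠ G_1`
    (hl : Subgroup.centralizer (Subgroup.lowerCentralSeries (⊤ : Subgroup G) (n - 3) : Set G) ≠ G1) :
    ∀ φ : G1 →* G, ¬ IsSimpleVirtualEndo G1 φ := by
  intro φ hφ
  have : Fact p.Prime := ⟨hp⟩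
  have hG : IsMaximalClass p n G := ⟨hcard, hmc₁, hmc₂⟩
  exact hmc₂ (hφ _ (Subgroup.lowerCentralSeries_le_of_forall hG1 (by omega)) inferInstance
    (hG.map_subgroupOf_lowerCentralSeries_le hn hG1 hl φ))
end
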